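/- arXiv:2502.04087 — 6 statements merged into one kernel-verified Lean document; each statement's English description precedes it below -/
import Mathlib

section
/- For n ≥ 3 with n ≢ 0 (mod 3) and n ≠ 7 and n ≠ 4, the cycle C_n admits an efficient 2-limited dominating broadcast, i.e., mcr(C_n) = 2 for such n with n ≥ 5. (Construction: if n ≡ 2 (mod 3), write n = 5 + 3(k-1) using one vertex of cost 2 and k-1 vertices of cost 1; if n ≡ 1 (mod 3), n ≥ 10, write n = 2·5 + 3(k-3).) -/
open SimpleGraph

/-- A vertex `u` is `f`-dominated by exactly one vertex, and all costs are at most `k`: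
`f` is an efficient `k`-limited dominating broadcast. -/
def IsELDB {V : Type*} (G : SimpleGraph V) (k : ℕ) (f : V → ℕ) : Prop :=
  (∀ v, f v ≤ k) ∧ ∀ u, ∃! v, 1 ≤ f v ∧ G.dist u v ≤ f v

/-- Eccentricity of a vertex. -/
noncomputable def ecc {V : Type*} (G : SimpleGraph V) [Fintype V] (v : V) : ℕ :=
  Finset.univ.sup (fun u => G.dist v u)

/-- Radius of a graph. -/
noncomputable def grad {V : Type*} (G : SimpleGraph V) [Fintype V] [Nonempty V] : ℕ :=
  Finset.univ.inf' Finset.univ_nonempty (ecc G)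

/-- Total cost of a broadcast. -/
def cost {V : Type*} [Fintype V] (f : V → ℕ) : ℕ := ∑ v, f v

section Aux
variable {n : ℕ}
open Fin.NatCast Fin.CommRing

lemma subval (u v : Fin n) :
    ((u - v).val = u.val - v.val ∧ v.val ≤ u.val) ∨
    ((u - v).val = u.val + n - v.val ∧ u.val < v.val) := by
  have hu := u.isLt
  have hv := v.isLt
  rw [Fin.sub_def]
  simp only [Fin.val_mk]
  rcases le_or_gt v.val u.val with h | h
  · left
    refine ⟨?_, h⟩
    have : n - v.val + u.val = (u.val - v.val) + n := by omega
    rw [this, Nat.add_mod_right, Nat.mod_eq_of_lt (by omega)]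
  · right
    refine ⟨?_, h⟩
    rw [Nat.mod_eq_of_lt (by omega)]
    omega

lemma addval (u v : Fin n) :
    ((u + v).val = u.val + v.val ∧ u.val + v.val < n) ∨
    ((u + v).val = u.val + v.val - n ∧ n ≤ u.val + v.val) := by
  have hu := u.isLt
  have hv := v.isLt
  rw [Fin.add_def]
  simp only [Fin.val_mk]
  rcases lt_or_ge (u.val + v.val) n with h | h
  · exact .inl ⟨Nat.mod_eq_of_lt h, h⟩
  · right
    refine ⟨?_, h⟩
    rw [Nat.mod_eq_sub_mod h, Nat.mod_eq_of_lt (by omega)]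

lemma adjval {u v : Fin n} :
    (cycleGraph n).Adj u v ↔ (u - v).val = 1 ∨ (v - u).val = 1 := cycleGraph_adj'

lemma walk_exists [NeZero n] (hn : 3 ≤ n) (u : Fin n) (m : ℕ) :
    ∃ w : (cycleGraph n).Walk u (u + (m : Fin n)), w.length = m := by
  induction m with
  | zero => exact ⟨(SimpleGraph.Walk.nil).copy rfl (by simp), by simp⟩
  | succ m ih =>
    obtain ⟨w, hw⟩ := ih
    have hadj : (cycleGraph n).Adj (u + (m : Fin n)) (u + ((m+1 : ℕ) : Fin n)) := by
      rw [adjval]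
      right
      have : u + ((m+1 : ℕ) : Fin n) - (u + (m : Fin n)) = 1 := by push_cast; ring
      rw [this, Fin.val_one', Nat.mod_eq_of_lt (by omega)]
    exact ⟨w.concat hadj, by simp [hw]⟩

lemma dist_le_cd [NeZero n] (hn : 3 ≤ n) (u v : Fin n) :
    (cycleGraph n).dist u v ≤ (v - u).val := by
  obtain ⟨w, hw⟩ := walk_exists hn u (v - u).val
  have : u + (((v - u).val : ℕ) : Fin n) = v := by
    rw [Fin.cast_val_eq_self]; ring
  have h2 := SimpleGraph.dist_le (w.copy rfl this)
  simpa [hw] using h2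

lemma walk_lower : ∀ {u v : Fin n} (w : (cycleGraph n).Walk u v),
    min (u - v).val (v - u).val ≤ w.length := by
  intro u v w
  induction w with
  | nil =>
    rename_i x
    have := subval x x
    simp only [SimpleGraph.Walk.length_nil]
    omega
  | @cons a b c h p ih =>
    rw [adjval] at h
    have s1 := subval a b; have s2 := subval b a
    have s3 := subval a c; have s4 := subval c a
    have s5 := subval b c; have s6 := subval c b
    have ha := a.isLt; have hb := b.isLt; have hc := c.isLt
    simp only [SimpleGraph.Walk.length_cons]
    omega

lemma dist_eq_cd (hn : 3 ≤ n) (u v : Fin n) :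
    (cycleGraph n).dist u v = min (u - v).val (v - u).val := by
  haveI : NeZero n := ⟨by omega⟩
  apply le_antisymm
  · exact le_min (by rw [SimpleGraph.dist_comm]; exact dist_le_cd hn v u) (dist_le_cd hn u v)
  · rcases eq_or_ne u v with rfl | hne
    · have := subval u u
      omega
    · have hreach : (cycleGraph n).Reachable u v := by
        obtain ⟨w, _⟩ := walk_exists hn u (v - u).val
        have : u + (((v - u).val : ℕ) : Fin n) = v := by
          rw [Fin.cast_val_eq_self]; ring
        exact ⟨w.copy rfl this⟩
      obtain ⟨p, hp⟩ := hreach.exists_walk_length_eq_dist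
      rw [← hp]
      exact walk_lower p

lemma exu_help (hn : 3 ≤ n) (f : Fin n → ℕ) (u : Fin n) (w : ℕ) (hw : w < n)
    (h1 : 1 ≤ f ⟨w, hw⟩)
    (h2 : min ((u - ⟨w, hw⟩).val) (((⟨w, hw⟩ : Fin n) - u).val) ≤ f ⟨w, hw⟩)
    (h3 : ∀ v : Fin n, 1 ≤ f v → min ((u - v).val) ((v - u).val) ≤ f v → v.val = w) :
    ∃! v, 1 ≤ f v ∧ (cycleGraph n).dist u v ≤ f v := by
  refine ⟨⟨w, hw⟩, ⟨h1, by rw [dist_eq_cd hn]; exact h2⟩, fun v hv => Fin.ext ?_⟩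
  exact h3 v hv.1 (by rw [← dist_eq_cd hn]; exact hv.2)

def F2 (n b : ℕ) : ℕ :=
  if b = 0 then 2 else if b % 3 = 1 ∧ 4 ≤ b ∧ b + 4 ≤ n then 1 else 0

def F1 (n b : ℕ) : ℕ :=
  if b = 0 ∨ b = 5 then 2 else if b % 3 = 0 ∧ 9 ≤ b ∧ b + 4 ≤ n then 1 else 0

lemma exists2' (hn : 3 ≤ n) (h2 : n % 3 = 2) :
    ∃ f : Fin n → ℕ, IsELDB (cycleGraph n) 2 f := by
  refine ⟨fun v => F2 n v.val, ?_, ?_⟩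
  · intro v; show F2 n v.val ≤ 2; unfold F2; split_ifs <;> omega
  · intro u
    have hu := u.isLt
    by_cases hcase : u.val ≤ 2 ∨ n - 2 ≤ u.val
    · apply exu_help hn _ u 0 (by omega)
      · simp only [Fin.val_mk]; unfold F2; split_ifs <;> omega
      · have s1 := subval u ⟨0, by omega⟩; have s2 := subval (⟨0, by omega⟩ : Fin n) u
        simp only [Fin.val_mk] at s1 s2 ⊢
        unfold F2; split_ifs <;> omega
      · intro v h1 h2
        have s1 := subval u v; have s2 := subval v u
        have hv := v.isLt
        unfold F2 at h1 h2
        split_ifs at h1 h2 <;> omega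
    · apply exu_help hn _ u (3*((u.val-3)/3)+4) (by omega)
      · simp only [Fin.val_mk]; unfold F2; split_ifs <;> omega
      · have s1 := subval u ⟨3*((u.val-3)/3)+4, by omega⟩
        have s2 := subval (⟨3*((u.val-3)/3)+4, by omega⟩ : Fin n) u
        simp only [Fin.val_mk] at s1 s2 ⊢
        unfold F2; split_ifs <;> omega
      · intro v h1 h2
        have s1 := subval u v; have s2 := subval v u
        have hv := v.isLt
        unfold F2 at h1 h2
        split_ifs at h1 h2 <;> omega

lemma exists1' (hn : 10 ≤ n) (h1 : n % 3 = 1) :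
    ∃ f : Fin n → ℕ, IsELDB (cycleGraph n) 2 f := by
  have hn3 : 3 ≤ n := by omega
  refine ⟨fun v => F1 n v.val, ?_, ?_⟩
  · intro v; show F1 n v.val ≤ 2; unfold F1; split_ifs <;> omega
  · intro u
    have hu := u.isLt
    by_cases hcase : u.val ≤ 2 ∨ n - 2 ≤ u.val
    · apply exu_help hn3 _ u 0 (by omega)
      · simp only [Fin.val_mk]; unfold F1; split_ifs <;> omega
      · have s1 := subval u ⟨0, by omega⟩; have s2 := subval (⟨0, by omega⟩ : Fin n) u
        simp only [Fin.val_mk] at s1 s2 ⊢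
        unfold F1; split_ifs <;> omega
      · intro v h1 h2
        have s1 := subval u v; have s2 := subval v u
        have hv := v.isLt
        unfold F1 at h1 h2
        split_ifs at h1 h2 <;> omega
    · by_cases hcase2 : u.val ≤ 7
      · apply exu_help hn3 _ u 5 (by omega)
        · simp only [Fin.val_mk]; unfold F1; split_ifs <;> omega
        · have s1 := subval u ⟨5, by omega⟩; have s2 := subval (⟨5, by omega⟩ : Fin n) u
          simp only [Fin.val_mk] at s1 s2 ⊢
          unfold F1; split_ifs <;> omega
        · intro v h1 h2
          have s1 := subval u v; have s2 := subval v u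
          have hv := v.isLt
          unfold F1 at h1 h2
          split_ifs at h1 h2 <;> omega
      · apply exu_help hn3 _ u (3*((u.val-8)/3)+9) (by omega)
        · simp only [Fin.val_mk]; unfold F1; split_ifs <;> omega
        · have s1 := subval u ⟨3*((u.val-8)/3)+9, by omega⟩
          have s2 := subval (⟨3*((u.val-8)/3)+9, by omega⟩ : Fin n) u
          simp only [Fin.val_mk] at s1 s2 ⊢
          unfold F1; split_ifs <;> omega
        · intro v h1 h2
          have s1 := subval u v; have s2 := subval v u
          have hv := v.isLt
          unfold F1 at h1 h2
          split_ifs at h1 h2 <;> omega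

set_option maxHeartbeats 800000 in
lemma no_one' (hn : 3 ≤ n) (h3 : n % 3 ≠ 0) :
    ¬ ∃ f : Fin n → ℕ, IsELDB (cycleGraph n) 1 f := by
  haveI : NeZero n := ⟨by omega⟩
  have hn4 : 4 ≤ n := by omega
  rintro ⟨f, hf1, hf2⟩
  have c1val : ((1:ℕ) : Fin n).val = 1 := by
    rw [Fin.val_natCast]; exact Nat.mod_eq_of_lt (by omega)
  have c2val : ((2:ℕ) : Fin n).val = 2 := by
    rw [Fin.val_natCast]; exact Nat.mod_eq_of_lt (by omega)
  have c3val : ((3:ℕ) : Fin n).val = 3 := by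
    rw [Fin.val_natCast]; exact Nat.mod_eq_of_lt (by omega)
  have key : ∀ v : Fin n, f v = 1 →
      f (v + ((3:ℕ) : Fin n)) = 1 ∧ f (v + ((1:ℕ) : Fin n)) ≠ 1 := by
    intro v hv
    have a1 := addval v ((1:ℕ) : Fin n)
    have a2 := addval v ((2:ℕ) : Fin n)
    have a3 := addval v ((3:ℕ) : Fin n)
    rw [c1val] at a1; rw [c2val] at a2; rw [c3val] at a3
    have hvlt := v.isLt
    obtain ⟨w, hw, hwu⟩ := hf2 (v + ((1:ℕ) : Fin n))
    have hwv : v = w := by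
      apply hwu
      refine ⟨by omega, ?_⟩
      rw [dist_eq_cd hn]
      have he : v + ((1:ℕ) : Fin n) - v = ((1:ℕ) : Fin n) := add_sub_cancel_left v _
      have h1 : (v + ((1:ℕ) : Fin n) - v).val = 1 := by rw [he, c1val]
      omega
    have hne1 : f (v + ((1:ℕ) : Fin n)) ≠ 1 := by
      intro hcon
      have heq : v + ((1:ℕ) : Fin n) = w := by
        apply hwu
        refine ⟨by omega, ?_⟩
        rw [SimpleGraph.dist_self]
        omega
      rw [← hwv] at heq
      have := congrArg Fin.val heq
      omega
    have hne2 : f (v + ((2:ℕ) : Fin n)) ≠ 1 := by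
      intro hcon
      have heq : v + ((2:ℕ) : Fin n) = w := by
        apply hwu
        refine ⟨by omega, ?_⟩
        rw [dist_eq_cd hn]
        have he : v + ((2:ℕ) : Fin n) - (v + ((1:ℕ) : Fin n)) = ((1:ℕ) : Fin n) := by
          have e1 : v + ((2:ℕ) : Fin n) = v + ((1:ℕ):Fin n) + ((1:ℕ):Fin n) := by
            push_cast; ring
          rw [e1, add_sub_cancel_left]
        have h1 : (v + ((2:ℕ) : Fin n) - (v + ((1:ℕ) : Fin n))).val = 1 := by rw [he, c1val]
        omega
      rw [← hwv] at heq
      have := congrArg Fin.val heq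
      omega
    refine ⟨?_, hne1⟩
    obtain ⟨x, ⟨hx1, hx2⟩, _⟩ := hf2 (v + ((2:ℕ) : Fin n))
    have hfx : f x = 1 := le_antisymm (hf1 x) hx1
    rw [dist_eq_cd hn] at hx2
    have s1 := subval (v + ((2:ℕ) : Fin n)) x
    have s2 := subval x (v + ((2:ℕ) : Fin n))
    have hxlt := x.isLt
    have hxne1 : x.val ≠ (v + ((1:ℕ) : Fin n)).val := fun h => hne1 (Fin.ext h ▸ hfx)
    have hxne2 : x.val ≠ (v + ((2:ℕ) : Fin n)).val := fun h => hne2 (Fin.ext h ▸ hfx)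
    have hx3 : x = v + ((3:ℕ) : Fin n) := by
      apply Fin.ext
      clear hwu hw hwv hne1 hne2 hf1 hf2 hv h3 hx1
      omega
    rw [← hx3]
    exact hfx
  obtain ⟨v0, ⟨hv0, hd0⟩, _⟩ := hf2 ⟨0, by omega⟩
  have hv01 : f v0 = 1 := le_antisymm (hf1 v0) hv0
  have iter : ∀ k : ℕ, f (v0 + ((3*k : ℕ) : Fin n)) = 1 := by
    intro k; induction k with
    | zero => simpa using hv01
    | succ k ih =>
      have h := (key _ ih).1
      have heq : v0 + ((3*(k+1) : ℕ) : Fin n)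
          = v0 + ((3*k : ℕ) : Fin n) + ((3:ℕ) : Fin n) := by push_cast; ring
      rw [heq]; exact h
  obtain ⟨k, hk⟩ : ∃ k, 3 * k = n + 1 ∨ 3 * k = 2*n+1 := by
    have h12 : n % 3 = 1 ∨ n % 3 = 2 := by omega
    rcases h12 with h | h
    · exact ⟨(2*n+1)/3, Or.inr (by omega)⟩
    · exact ⟨(n+1)/3, Or.inl (by omega)⟩
  have hcast : ((3*k : ℕ) : Fin n) = ((1:ℕ) : Fin n) := by
    rcases hk with h | h <;> rw [h] <;> push_cast [Fin.natCast_self] <;> ring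
  have hfin := iter k
  rw [hcast] at hfin
  exact (key v0 hv01).2 hfin

end Aux

/-- For n ≥ 3 with n not divisible by 3, n ≠ 7, n ≠ 4, mcr(C_n) = 2: there is an
efficient 2-limited dominating broadcast and no efficient 1-limited one. -/
theorem stmt7 (n : ℕ) (hn : 3 ≤ n) (h3 : n % 3 ≠ 0) (h7 : n ≠ 7) (h4 : n ≠ 4) :
    (∃ f : Fin n → ℕ, IsELDB (cycleGraph n) 2 f) ∧
      ¬ ∃ f : Fin n → ℕ, IsELDB (cycleGraph n) 1 f := by
  refine ⟨?_, no_one' hn h3⟩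
  have h12 : n % 3 = 1 ∨ n % 3 = 2 := by omega
  rcases h12 with h | h
  · exact exists1' (by omega) h
  · exact exists2' hn h
end

section
/- For k = mcr(C_n), the minimum cost of an efficient k-limited dominating broadcast of the cycle C_n is ⌈n/3⌉. -/
open SimpleGraph

namespace ELDBAux

open Finset
open Fin.NatCast Fin.CommRing

lemma sub_val'' {n : ℕ} (a b : Fin n) :
    (a - b).val = if b.val ≤ a.val then a.val - b.val else a.val + n - b.val := by
  have h := Fin.sub_def a b
  have ha := a.is_lt
  have hb := b.is_lt
  rw [h]
  rcases le_or_gt b.val a.val with hle | hlt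
  · rw [if_pos hle]
    have e : (n - b.val + a.val) = (a.val - b.val) + n := by omega
    simp only [e, Nat.add_mod_right, Nat.mod_eq_of_lt (show a.val - b.val < n by omega)]
  · rw [if_neg (by omega)]
    simp only [Nat.mod_eq_of_lt (show n - b.val + a.val < n by omega)]
    omega

lemma adj_succ {n : ℕ} [NeZero n] (hn : 3 ≤ n) (a : Fin n) : (cycleGraph n).Adj a (a + 1) := by
  rw [cycleGraph_adj']
  right
  rw [add_sub_cancel_left]
  exact Nat.one_mod_eq_one.mpr (by omega)

lemma walk_exists {n : ℕ} [NeZero n] (hn : 3 ≤ n) (a : Fin n) (m : ℕ) :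
    ∃ p : (cycleGraph n).Walk a (a + (m : Fin n)), p.length = m := by
  induction m with
  | zero => exact ⟨Walk.nil.copy rfl (by simp), by simp⟩
  | succ m ih =>
    obtain ⟨p, hp⟩ := ih
    have e : a + ((m+1 : ℕ) : Fin n) = (a + ((m:ℕ) : Fin n)) + 1 := by
      push_cast; ring
    refine ⟨(p.concat (adj_succ hn _)).copy rfl e.symm, ?_⟩
    rw [Walk.length_copy, Walk.length_concat, hp]

lemma dist_le_sub {n : ℕ} [NeZero n] (hn : 3 ≤ n) (a b : Fin n) :
    (cycleGraph n).dist a b ≤ (b - a).val := by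
  obtain ⟨p, hp⟩ := walk_exists hn a ((b - a).val)
  have e : a + (((b - a).val : ℕ) : Fin n) = b := by
    rw [Fin.cast_val_eq_self]; ring
  calc (cycleGraph n).dist a b ≤ (p.copy rfl e).length := dist_le _
  _ = _ := by rw [Walk.length_copy, hp]

lemma step_lemma {n : ℕ} (hn : 3 ≤ n) (a c b : Fin n)
    (h : (a - c).val = 1 ∨ (c - a).val = 1) :
    min (a-b).val (b-a).val ≤ min (c-b).val (b-c).val + 1 := by
  have ha := a.is_lt; have hb := b.is_lt; have hc := c.is_lt
  rw [sub_val''] at h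
  rw [sub_val'' c a] at h
  rw [sub_val'' a b, sub_val'' b a, sub_val'' c b, sub_val'' b c]
  split_ifs at h ⊢ <;> omega

lemma walk_ge {n : ℕ} (hn : 3 ≤ n) {a b : Fin n} (p : (cycleGraph n).Walk a b) :
    min (a-b).val (b-a).val ≤ p.length := by
  induction p with
  | nil => rw [sub_val'']; simp
  | cons h q ih =>
    rename_i u v w
    rw [Walk.length_cons]
    have := step_lemma hn u v w (by rwa [cycleGraph_adj'] at h)
    omega

lemma cycle_dist' {n : ℕ} (hn : 3 ≤ n) (a b : Fin n) :
    (cycleGraph n).dist a b = min (a-b).val (b-a).val := by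
  haveI : NeZero n := ⟨by omega⟩
  apply le_antisymm
  · exact le_min (by rw [SimpleGraph.dist_comm]; exact dist_le_sub hn b a) (dist_le_sub hn a b)
  · obtain ⟨p, hp⟩ := walk_exists hn a ((b - a).val)
    have e : a + (((b - a).val : ℕ) : Fin n) = b := by
      rw [Fin.cast_val_eq_self]; ring
    obtain ⟨q, hq⟩ := (Reachable.exists_walk_length_eq_dist ⟨p.copy rfl e⟩ : _)
    calc min (a-b).val (b-a).val ≤ q.length := walk_ge hn q
    _ = _ := hq

lemma ball_card_le' {n : ℕ} (hn : 3 ≤ n) (v : Fin n) (r : ℕ) :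
    (univ.filter fun u => (cycleGraph n).dist u v ≤ r).card ≤ 2 * r + 1 := by
  classical
  have h1 : (univ.filter fun u => (cycleGraph n).dist u v ≤ r).card
      ≤ (Finset.range (r+1) ∪ Finset.Ico (n-r) n).card := by
    apply Finset.card_le_card_of_injOn (fun u => (u - v).val)
    · intro u hu
      simp only [Finset.mem_coe, mem_filter, mem_univ, true_and] at hu
      rw [cycle_dist' hn] at hu
      have h2 := sub_val'' u v
      have h3 := sub_val'' v u
      have := u.is_lt; have := v.is_lt
      simp only [Finset.mem_coe, mem_union, mem_range, mem_Ico]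
      split_ifs at h2 h3 <;> omega
    · intro u hu w hw he
      have h2 := sub_val'' u v
      have h3 := sub_val'' w v
      have := u.is_lt; have := w.is_lt; have := v.is_lt
      apply Fin.ext
      simp only at he
      split_ifs at h2 h3 <;> omega
  calc _ ≤ _ := h1
  _ ≤ (Finset.range (r+1)).card + (Finset.Ico (n-r) n).card := Finset.card_union_le _ _
  _ ≤ 2 * r + 1 := by rw [Finset.card_range, Nat.card_Ico]; omega

lemma ball_card_exact' {n : ℕ} (hn : 3 ≤ n) (v : Fin n) (r : ℕ) (hr : 2 * r + 1 ≤ n) :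
    (univ.filter fun u => (cycleGraph n).dist u v ≤ r).card = 2 * r + 1 := by
  classical
  haveI : NeZero n := ⟨by omega⟩
  refine le_antisymm (ball_card_le' hn v r) ?_
  have h1 : (Finset.range (2*r+1)).card ≤
      (univ.filter fun u => (cycleGraph n).dist u v ≤ r).card := by
    refine Finset.card_le_card_of_injOn (fun i => v + (i : Fin n) - (r : Fin n)) ?_ ?_
    · intro i hi
      simp only [Finset.mem_coe, mem_range] at hi
      simp only [Finset.mem_coe, mem_filter, mem_univ, true_and]
      rw [cycle_dist' hn]
      have e : v + (i : Fin n) - (r : Fin n) - v = (i : Fin n) - (r : Fin n) := by ring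
      have e2 : v - (v + (i : Fin n) - (r : Fin n)) = (r : Fin n) - (i : Fin n) := by ring
      rw [e, e2]
      have h2 := sub_val'' (i : Fin n) (r : Fin n)
      have h3 := sub_val'' (r : Fin n) (i : Fin n)
      have hiv : ((i : Fin n)).val = i := Fin.val_cast_of_lt (by omega)
      have hrv : ((r : Fin n)).val = r := Fin.val_cast_of_lt (by omega)
      rw [hiv, hrv] at h2 h3
      split_ifs at h2 h3 <;> omega
    · intro i hi j hj he
      rw [Finset.mem_coe, Finset.mem_range] at hi hj
      have he' : v + (i : Fin n) - (r : Fin n) = v + (j : Fin n) - (r : Fin n) := he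
      rw [sub_left_inj, add_right_inj] at he'
      have := congrArg Fin.val he'
      rwa [Fin.val_cast_of_lt (by omega : i < n), Fin.val_cast_of_lt (by omega : j < n)] at this
  simpa using h1

lemma fiber_setup {n : ℕ} (f : Fin n → ℕ)
    (hf : ∀ u, ∃! v, 1 ≤ f v ∧ (cycleGraph n).dist u v ≤ f v) :
    ∃ t : Fin n → Fin n, (∀ u, 1 ≤ f (t u) ∧ (cycleGraph n).dist u (t u) ≤ f (t u)) ∧
      (∀ v, 1 ≤ f v → (univ.filter fun u => t u = v) =
        (univ.filter fun u => (cycleGraph n).dist u v ≤ f v)) := by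
  classical
  choose t ht hu using hf
  refine ⟨t, ht, fun v hv => ?_⟩
  ext u
  simp only [mem_filter, mem_univ, true_and]
  constructor
  · rintro rfl; exact (ht u).2
  · intro hd; exact (hu u v ⟨hv, hd⟩).symm

lemma sum_fibers {n : ℕ} (t : Fin n → Fin n) :
    ∑ v : Fin n, (univ.filter fun u => t u = v).card = n := by
  classical
  rw [← Finset.card_eq_sum_card_fiberwise (fun u _ => mem_univ (t u))]
  simp

lemma cost_lower {n : ℕ} (hn : 3 ≤ n) (f : Fin n → ℕ)
    (hf : ∀ u, ∃! v, 1 ≤ f v ∧ (cycleGraph n).dist u v ≤ f v) :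
    (n + 2) / 3 ≤ cost f := by
  classical
  obtain ⟨t, ht, hfib⟩ := fiber_setup f hf
  have key : ∀ v : Fin n, (univ.filter fun u => t u = v).card ≤ 3 * f v := by
    intro v
    rcases Nat.eq_zero_or_pos (f v) with h0 | h1
    · have : (univ.filter fun u => t u = v) = ∅ := by
        ext u
        simp only [mem_filter, mem_univ, true_and, Finset.notMem_empty, iff_false]
        rintro rfl
        have := (ht u).1; omega
      rw [this]; simp
    · rw [hfib v h1]
      have := ball_card_le' hn v (f v)
      omega
  have h2 : n ≤ ∑ v : Fin n, 3 * f v := by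
    calc n = ∑ v : Fin n, (univ.filter fun u => t u = v).card := (sum_fibers t).symm
    _ ≤ _ := Finset.sum_le_sum fun v _ => key v
  rw [← Finset.mul_sum] at h2
  have h3 : (n:ℕ) ≤ 3 * cost f := h2
  omega

lemma exact_sum {n : ℕ} (hn : 3 ≤ n) (f : Fin n → ℕ)
    (hf : ∀ u, ∃! v, 1 ≤ f v ∧ (cycleGraph n).dist u v ≤ f v)
    (hsmall : ∀ v, 1 ≤ f v → 2 * f v + 1 ≤ n) :
    ∑ v ∈ univ.filter (fun v => 1 ≤ f v), (2 * f v + 1) = n := by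
  classical
  obtain ⟨t, ht, hfib⟩ := fiber_setup f hf
  have key : ∀ v : Fin n, (univ.filter fun u => t u = v).card
      = if 1 ≤ f v then 2 * f v + 1 else 0 := by
    intro v
    rcases Nat.lt_or_ge (f v) 1 with h0 | h1
    · rw [if_neg (by omega)]
      rw [Finset.card_eq_zero]
      ext u
      simp only [mem_filter, mem_univ, true_and, Finset.notMem_empty, iff_false]
      rintro rfl
      have := (ht u).1; omega
    · rw [if_pos h1, hfib v h1]
      exact ball_card_exact' hn v (f v) (hsmall v h1)
  have h2 := sum_fibers t
  rw [Finset.sum_congr rfl (fun v _ => key v)] at h2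
  rw [Finset.sum_filter]; exact h2

lemma no_k1 {n : ℕ} (hn : 3 ≤ n) (hmod : n % 3 ≠ 0) (f : Fin n → ℕ) (hb : ∀ v, f v ≤ 1) :
    ¬ (∀ u, ∃! v, 1 ≤ f v ∧ (cycleGraph n).dist u v ≤ f v) := by
  classical
  intro hf
  have h := exact_sum hn f hf (fun v hv => by have := hb v; omega)
  have he : ∑ v ∈ univ.filter (fun v => 1 ≤ f v), (2 * f v + 1)
      = ∑ v ∈ univ.filter (fun v => 1 ≤ f v), 3 := by
    apply Finset.sum_congr rfl
    intro v hv
    simp only [mem_filter] at hv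
    have := hb v; omega
  rw [he, Finset.sum_const, smul_eq_mul] at h
  omega

lemma no_72 (f : Fin 7 → ℕ) (hb : ∀ v, f v ≤ 2) :
    ¬ (∀ u, ∃! v, 1 ≤ f v ∧ (cycleGraph 7).dist u v ≤ f v) := by
  classical
  intro hf
  have h := exact_sum (by norm_num) f hf (fun v hv => by have := hb v; omega)
  set T := univ.filter (fun v : Fin 7 => 1 ≤ f v) with hT
  have hlb : 3 * T.card ≤ 7 := by
    calc 3 * T.card = ∑ _v ∈ T, 3 := by rw [Finset.sum_const, smul_eq_mul]; ring
    _ ≤ ∑ v ∈ T, (2 * f v + 1) := Finset.sum_le_sum (fun v hv => by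
        simp only [hT, mem_filter] at hv; omega)
    _ = 7 := h
  have hub : 7 ≤ 5 * T.card := by
    calc (7:ℕ) = ∑ v ∈ T, (2 * f v + 1) := h.symm
    _ ≤ ∑ _v ∈ T, 5 := Finset.sum_le_sum (fun v hv => by have := hb v; omega)
    _ = 5 * T.card := by rw [Finset.sum_const, smul_eq_mul]; ring
  have hcard : T.card = 2 := by omega
  obtain ⟨a, b, hab, hTab⟩ := Finset.card_eq_two.mp hcard
  rw [hTab] at h
  rw [Finset.sum_pair hab] at h
  have ha : a ∈ T := by rw [hTab]; simp
  have hb' : b ∈ T := by rw [hTab]; simp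
  simp only [hT, mem_filter] at ha hb'
  have := hb a; have := hb b
  omega

/-- pattern broadcast -/
def FF (c x : ℕ) : ℕ :=
  if x < c then (if x % 5 = 2 then 2 else 0) else (if (x - c) % 3 = 1 then 1 else 0)

lemma FF_le (c x : ℕ) : FF c x ≤ 2 := by
  unfold FF; split_ifs <;> omega

lemma FF0_le (x : ℕ) : FF 0 x ≤ 1 := by
  unfold FF; split_ifs <;> omega

lemma construct_dom {n : ℕ} (hn : 3 ≤ n) (c : ℕ) (hc : c = 0 ∨ c = 5 ∨ c = 10)
    (hcn : c ≤ n) (hmod : n % 3 = c % 3) (u : Fin n) :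
    ∃! v : Fin n, 1 ≤ FF c v.val ∧ (cycleGraph n).dist u v ≤ FF c v.val := by
  have hu := u.is_lt
  rcases Nat.lt_or_ge u.val c with hcase | hcase
  · refine ⟨⟨5*(u.val/5)+2, by rcases hc with rfl|rfl|rfl <;> omega⟩, ⟨?_, ?_⟩, ?_⟩
    · unfold FF; simp only [Fin.val_mk]; rcases hc with rfl|rfl|rfl <;> (split_ifs <;> omega)
    · rw [cycle_dist' hn, sub_val'', sub_val'']
      unfold FF
      simp only [Fin.val_mk]
      rcases hc with rfl|rfl|rfl <;> (split_ifs <;> omega)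
    · rintro w ⟨hw1, hw2⟩
      rw [cycle_dist' hn, sub_val'', sub_val''] at hw2
      unfold FF at hw1 hw2
      have hw := w.is_lt
      apply Fin.ext
      simp only [Fin.val_mk]
      rcases hc with rfl|rfl|rfl <;> (split_ifs at hw1 hw2 <;> omega)
  · refine ⟨⟨c + 3*((u.val - c)/3) + 1, by omega⟩, ⟨?_, ?_⟩, ?_⟩
    · unfold FF; simp only [Fin.val_mk]; split_ifs <;> omega
    · rw [cycle_dist' hn, sub_val'', sub_val'']
      unfold FF
      simp only [Fin.val_mk]
      split_ifs <;> omega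
    · rintro w ⟨hw1, hw2⟩
      rw [cycle_dist' hn, sub_val'', sub_val''] at hw2
      unfold FF at hw1 hw2
      have hw := w.is_lt
      apply Fin.ext
      simp only [Fin.val_mk]
      rcases hc with rfl|rfl|rfl <;> (split_ifs at hw1 hw2 <;> omega)

lemma sum_FF (c : ℕ) (hc : c = 0 ∨ c = 5 ∨ c = 10) (t : ℕ) :
    ∑ m ∈ Finset.range (c + 3*t), FF c m = 2*(c/5) + t := by
  induction t with
  | zero =>
    simp only [Nat.mul_zero, Nat.add_zero]
    rcases hc with rfl|rfl|rfl <;> decide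
  | succ t ih =>
    have e : c + 3*(t+1) = (c + 3*t) + 1 + 1 + 1 := by ring
    rw [e, Finset.sum_range_succ, Finset.sum_range_succ, Finset.sum_range_succ, ih]
    have h1 : FF c (c + 3*t) = 0 := by unfold FF; split_ifs <;> omega
    have h2 : FF c (c + 3*t + 1) = 1 := by unfold FF; split_ifs <;> omega
    have h3 : FF c (c + 3*t + 2) = 0 := by unfold FF; split_ifs <;> omega
    have e2 : c + 3*t + 1 + 1 = c + 3*t + 2 := by ring
    rw [e2, h1, h2, h3]
    omega

lemma cost_FF {n : ℕ} (c : ℕ) (hc : c = 0 ∨ c = 5 ∨ c = 10)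
    (hcn : c ≤ n) (hmod : n % 3 = c % 3) :
    ∑ i : Fin n, FF c i.val = (n + 2) / 3 := by
  rw [Fin.sum_univ_eq_sum_range (fun m => FF c m)]
  have e : n = c + 3 * ((n - c)/3) := by omega
  rw [e, sum_FF c hc]
  rcases hc with rfl|rfl|rfl <;> omega

lemma single_dom {n : ℕ} (hn : 3 ≤ n) (r : ℕ) (hr1 : 1 ≤ r) (hrn : n ≤ 2*r+1) (u : Fin n) :
    ∃! v : Fin n, 1 ≤ (if v.val = 0 then r else 0) ∧
      (cycleGraph n).dist u v ≤ (if v.val = 0 then r else 0) := by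
  have hu := u.is_lt
  refine ⟨⟨0, by omega⟩, ⟨?_, ?_⟩, ?_⟩
  · simpa using hr1
  · rw [cycle_dist' hn, sub_val'', sub_val'']
    simp only [Fin.val_mk]
    split_ifs <;> omega
  · rintro w ⟨hw1, hw2⟩
    have hw := w.is_lt
    apply Fin.ext
    simp only [Fin.val_mk]
    split_ifs at hw1 with h
    · exact h
    · omega

lemma cost_single {n : ℕ} (hn : 3 ≤ n) (r : ℕ) :
    ∑ i : Fin n, (if i.val = 0 then r else 0) = r := by
  rw [Finset.sum_eq_single (⟨0, by omega⟩ : Fin n)]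
  · simp
  · intro b _ hb
    rw [if_neg (fun h => hb (Fin.ext h))]
  · intro h
    exact absurd (mem_univ _) h

end ELDBAux

open ELDBAux Finset

/-- For k = mcr(C_n), γ_{ebk}(C_n) = ⌈n/3⌉. -/
theorem stmt9 (n : ℕ) (hn : 3 ≤ n)
    (k : ℕ) (hk : k = sInf {k | ∃ f : Fin n → ℕ, IsELDB (cycleGraph n) k f}) :
    sInf {c | ∃ f : Fin n → ℕ, IsELDB (cycleGraph n) k f ∧ cost f = c} =
      (n + 2) / 3 := by
  classical
  obtain ⟨m, f0, h1, h2, h3, hm1, hm2, hm3, hm4⟩ : ∃ (m : ℕ) (f0 : Fin n → ℕ),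
      (∀ v, f0 v ≤ m) ∧
      (∀ u, ∃! v, 1 ≤ f0 v ∧ (cycleGraph n).dist u v ≤ f0 v) ∧
      cost f0 = (n + 2) / 3 ∧ (1 ≤ m) ∧ (2 ≤ m → n % 3 ≠ 0) ∧ (3 ≤ m → n = 7) ∧ m ≤ 3 := by
    by_cases h3n : n % 3 = 0
    · exact ⟨1, fun i => FF 0 i.val, fun v => FF0_le _,
        construct_dom hn 0 (Or.inl rfl) (by omega) (by omega),
        by unfold cost; exact cost_FF 0 (Or.inl rfl) (by omega) (by omega),
        by omega, by omega, by omega, by omega⟩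
    · by_cases h4 : n = 4
      · subst h4
        exact ⟨2, fun i => if i.val = 0 then 2 else 0, fun v => by dsimp only; split_ifs <;> omega,
          single_dom hn 2 (by omega) (by omega),
          by unfold cost; exact cost_single hn 2, by omega, by omega, by omega, by omega⟩
      · by_cases h7 : n = 7
        · subst h7
          exact ⟨3, fun i => if i.val = 0 then 3 else 0,
            fun v => by dsimp only; split_ifs <;> omega,
            single_dom hn 3 (by omega) (by omega),
            by unfold cost; exact cost_single hn 3, by omega, by omega, by omega, by omega⟩
        · rcases (by omega : n % 3 = 1 ∨ n % 3 = 2) with h | h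
          · exact ⟨2, fun i => FF 10 i.val, fun v => FF_le _ _,
              construct_dom hn 10 (Or.inr (Or.inr rfl)) (by omega) (by omega),
              by unfold cost; exact cost_FF 10 (Or.inr (Or.inr rfl)) (by omega) (by omega),
              by omega, by omega, by omega, by omega⟩
          · exact ⟨2, fun i => FF 5 i.val, fun v => FF_le _ _,
              construct_dom hn 5 (Or.inr (Or.inl rfl)) (by omega) (by omega),
              by unfold cost; exact cost_FF 5 (Or.inr (Or.inl rfl)) (by omega) (by omega),
              by omega, by omega, by omega, by omega⟩
  have hSne : {k | ∃ f : Fin n → ℕ, IsELDB (cycleGraph n) k f}.Nonempty := ⟨m, f0, h1, h2⟩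
  have hkS : ∃ f : Fin n → ℕ, IsELDB (cycleGraph n) k f := by
    rw [hk]; exact Nat.sInf_mem hSne
  obtain ⟨g, hg1, hg2⟩ := hkS
  have hk1 : 1 ≤ k := by
    by_contra h
    obtain ⟨v, ⟨hv, _⟩, _⟩ := hg2 ⟨0, by omega⟩
    have := hg1 v; omega
  have hmk : m ≤ k := by
    by_contra hcon
    push_neg at hcon
    rcases (by omega : k = 1 ∨ k = 2) with rfl | rfl
    · exact no_k1 hn (hm2 (by omega)) g hg1 hg2
    · have h7 : n = 7 := hm3 (by omega)
      subst h7
      exact no_72 g hg1 hg2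
  have hmem : (n+2)/3 ∈ {c | ∃ f : Fin n → ℕ, IsELDB (cycleGraph n) k f ∧ cost f = c} :=
    ⟨f0, ⟨fun v => (h1 v).trans hmk, h2⟩, h3⟩
  refine le_antisymm (Nat.sInf_le hmem) (le_csInf ⟨_, hmem⟩ ?_)
  rintro c ⟨f, ⟨hfb, hfd⟩, rfl⟩
  exact cost_lower hn f hfd
end

section
/- If f is an efficient k-limited dominating broadcast of the lexicographic product G·H and f(u,v) = 1 for some vertex (u,v), then H has radius 1 with central vertex v (i.e., v is adjacent to all other vertices of H). -/
open SimpleGraph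

/-- The lexicographic product of two simple graphs. -/
def lexProd {α β : Type*} (G : SimpleGraph α) (H : SimpleGraph β) :
    SimpleGraph (α × β) where
  Adj x y := G.Adj x.1 y.1 ∨ (x.1 = y.1 ∧ H.Adj x.2 y.2)
  symm := by
    refine ⟨?_⟩
    rintro x y (h | ⟨e, h⟩)
    · exact Or.inl h.symm
    · exact Or.inr ⟨e.symm, h.symm⟩
  loopless := by
    refine ⟨?_⟩
    rintro x (h | ⟨_, h⟩)
    · exact G.irrefl h
    · exact H.irrefl h

/-- Project a walk in the lexicographic product to a walk in `G` of at most the same length. -/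
lemma proj_walk {α β : Type*} {G : SimpleGraph α} {H : SimpleGraph β}
    {x y : α × β} (q : (lexProd G H).Walk x y) :
    ∃ p : G.Walk x.1 y.1, p.length ≤ q.length := by
  induction q with
  | nil => exact ⟨SimpleGraph.Walk.nil, le_refl _⟩
  | @cons a b c h q ih =>
    obtain ⟨p, hp⟩ := ih
    rcases h with h | h
    · exact ⟨SimpleGraph.Walk.cons h p, Nat.succ_le_succ hp⟩
    · exact ⟨p.copy h.1.symm rfl, by rw [SimpleGraph.Walk.length_copy]; exact hp.trans (Nat.le_succ _)⟩

/-- Lift a walk in `G` between distinct vertices to a walk in the lexicographic product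
with arbitrary second coordinates, of at most the same length. -/
lemma lift_walk {α β : Type*} {G : SimpleGraph α} (H : SimpleGraph β)
    {a b : α} (p : G.Walk a b) :
    a ≠ b → ∀ s t : β, ∃ q : (lexProd G H).Walk (a, s) (b, t), q.length ≤ p.length := by
  induction p with
  | nil => intro h; exact absurd rfl h
  | @cons a c b h p ih =>
    intro _ s t
    by_cases hcb : c = b
    · subst hcb
      exact ⟨SimpleGraph.Walk.cons (Or.inl h) SimpleGraph.Walk.nil, by exact Nat.succ_le_succ (Nat.zero_le _)⟩
    · obtain ⟨q, hq⟩ := ih hcb t t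
      exact ⟨SimpleGraph.Walk.cons (Or.inl h) q, by exact Nat.succ_le_succ hq⟩

/-- Lift a walk in `H` to a walk in the lexicographic product with fixed first coordinate. -/
def lift_walk₂ {α β : Type*} (G : SimpleGraph α) {H : SimpleGraph β}
    {s t : β} (p : H.Walk s t) (a : α) : (lexProd G H).Walk (a, s) (a, t) :=
  match p with
  | .nil => .nil
  | @SimpleGraph.Walk.cons _ _ _ c _ h q =>
    .cons (show (lexProd G H).Adj (a, _) (a, c) from Or.inr ⟨rfl, h⟩) (lift_walk₂ G q a)

lemma lex_reachable {α β : Type*} {G : SimpleGraph α} {H : SimpleGraph β}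
    (hG : G.Connected) (hH : H.Connected) (x y : α × β) :
    (lexProd G H).Reachable x y := by
  obtain ⟨a, s⟩ := x
  obtain ⟨b, t⟩ := y
  by_cases hab : a = b
  · subst hab
    obtain ⟨p⟩ := hH.preconnected s t
    exact ⟨lift_walk₂ G p a⟩
  · obtain ⟨p⟩ := hG.preconnected a b
    obtain ⟨q, _⟩ := lift_walk H p hab s t
    exact ⟨q⟩

/-- If f is an efficient k-limited dominating broadcast of G·H with f(u,v) = 1,
then H has radius 1 with central vertex v. -/
theorem stmt10 {α β : Type*} [Fintype α] [Fintype β]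
    (G : SimpleGraph α) (H : SimpleGraph β)
    (hG : G.Connected) (hH : H.Connected)
    (hGcard : 2 ≤ Fintype.card α) (hHcard : 2 ≤ Fintype.card β)
    (hGedge : ∃ a b, G.Adj a b)
    (k : ℕ) (f : α × β → ℕ) (hf : IsELDB (lexProd G H) k f)
    (u : α) (v : β) (huv : f (u, v) = 1) :
    ∀ w : β, w ≠ v → H.Adj v w := by
  intro w hwv
  have hdom := hf.2
  -- the unique dominator of (u,v) is (u,v) itself
  have hself : (1 : ℕ) ≤ f (u, v) ∧ (lexProd G H).dist (u, v) (u, v) ≤ f (u, v) := by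
    constructor
    · omega
    · rw [SimpleGraph.dist_self]
      omega
  have key0 : ∀ z, 1 ≤ f z → (lexProd G H).dist (u, v) z ≤ f z → z = (u, v) := by
    intro z hz1 hz2
    obtain ⟨y0, _, huniq0⟩ := hdom (u, v)
    exact (huniq0 z ⟨hz1, hz2⟩).trans (huniq0 (u, v) hself).symm
  -- a neighbor a of u in G
  have hnontriv : Nontrivial α := Fintype.one_lt_card_iff_nontrivial.mp (by omega)
  obtain ⟨b, hb⟩ := exists_ne u
  obtain ⟨p⟩ := hG.preconnected u b
  have hadj : ∃ a, G.Adj u a := by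
    cases p with
    | nil => exact absurd rfl (Ne.symm hb)
    | cons h q => exact ⟨_, h⟩
  obtain ⟨a, ha⟩ := hadj
  -- the dominator of (u,w)
  obtain ⟨y, ⟨hy1, hyd⟩, _⟩ := hdom (u, w)
  by_cases hyu : y.1 = u
  · by_cases hyv : y.2 = v
    · -- y = (u,v): then (u,w) is adjacent to (u,v)
      have hyeq : y = (u, v) := Prod.ext hyu hyv
      rw [hyeq, huv] at hyd
      have hne : (u, w) ≠ ((u, v) : α × β) := by
        simp [hwv]
      have hpos : 0 < (lexProd G H).dist (u, w) (u, v) :=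
        SimpleGraph.Reachable.pos_dist_of_ne (lex_reachable hG hH _ _) hne
      have h1 : (lexProd G H).dist (u, w) (u, v) = 1 := by omega
      have hadj' := (SimpleGraph.dist_eq_one_iff_adj.mp h1)
      rcases hadj' with h | h
      · exact absurd h (G.irrefl)
      · exact h.2.symm
    · -- y = (u, y2) with y2 ≠ v : (a, v) dominated by both (u,v) and y
      have h1 : (lexProd G H).dist (a, v) (u, v) ≤ f (u, v) := by
        have : (lexProd G H).Adj (a, v) (u, v) := Or.inl ha.symm
        have := SimpleGraph.dist_le this.toWalk
        simpa [huv] using this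
      have h2 : (lexProd G H).dist (a, v) y ≤ f y := by
        have : (lexProd G H).Adj (a, v) y := Or.inl (hyu ▸ ha.symm)
        have := SimpleGraph.dist_le this.toWalk
        simp at this
        omega
      obtain ⟨y', _, huniq'⟩ := hdom (a, v)
      have heq : ((u, v) : α × β) = y :=
        (huniq' (u, v) ⟨by omega, h1⟩).trans (huniq' y ⟨hy1, h2⟩).symm
      exact absurd (congrArg Prod.snd heq).symm hyv
  · -- y.1 ≠ u : transfer the domination of (u,w) by y to (u,v)
    exfalso
    obtain ⟨q, hq⟩ :=
      SimpleGraph.Reachable.exists_walk_length_eq_dist (lex_reachable hG hH (u, w) y)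
    obtain ⟨pG, hpG⟩ := proj_walk q
    obtain ⟨q2, hq2⟩ := lift_walk H pG (fun h => hyu h.symm) v y.2
    have hdist : (lexProd G H).dist (u, v) y ≤ f y := by
      have := SimpleGraph.dist_le (q2.copy rfl (Prod.mk.eta))
      calc (lexProd G H).dist (u, v) y ≤ q2.length := by simpa using this
        _ ≤ pG.length := hq2
        _ ≤ q.length := hpG
        _ ≤ f y := by omega
    have := key0 y hy1 hdist
    exact hyu (congrArg Prod.fst this)
end

section
/- For the strong product: mcr(G ⊠ H) ≥ max{mcr(G), mcr(H)}, i.e., if G ⊠ H admits an efficient l-limited dominating broadcast, then both G and H admit efficient l-limited dominating broadcasts. -/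
open SimpleGraph

/-- The strong product of two simple graphs. -/
def strongProd {α β : Type*} (G : SimpleGraph α) (H : SimpleGraph β) :
    SimpleGraph (α × β) where
  Adj x y := (x.1 = y.1 ∧ H.Adj x.2 y.2) ∨ (x.2 = y.2 ∧ G.Adj x.1 y.1) ∨
    (G.Adj x.1 y.1 ∧ H.Adj x.2 y.2)
  symm := by
    constructor
    rintro x y (⟨e, h⟩ | ⟨e, h⟩ | ⟨h1, h2⟩)
    · exact Or.inl ⟨e.symm, h.symm⟩
    · exact Or.inr (Or.inl ⟨e.symm, h.symm⟩)
    · exact Or.inr (Or.inr ⟨h1.symm, h2.symm⟩)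
  loopless := by
    constructor
    rintro x (⟨_, h⟩ | ⟨_, h⟩ | ⟨h, _⟩)
    · exact H.irrefl h
    · exact G.irrefl h
    · exact G.irrefl h

section aux

variable {α β : Type*} {G : SimpleGraph α} {H : SimpleGraph β}

lemma proj1 {a b : α × β} (w : (strongProd G H).Walk a b) :
    ∃ p : G.Walk a.1 b.1, p.length ≤ w.length := by
  induction w with
  | nil => exact ⟨.nil, le_rfl⟩
  | @cons a c b h w ih =>
    obtain ⟨p, hp⟩ := ih
    rcases h with ⟨e, -⟩ | ⟨-, hadj⟩ | ⟨hadj, -⟩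
    · exact ⟨p.copy e.symm rfl, (Walk.length_copy _ _ _).le.trans (Nat.le_succ_of_le hp)⟩
    · exact ⟨p.cons hadj, Nat.succ_le_succ hp⟩
    · exact ⟨p.cons hadj, Nat.succ_le_succ hp⟩

lemma proj2 {a b : α × β} (w : (strongProd G H).Walk a b) :
    ∃ p : H.Walk a.2 b.2, p.length ≤ w.length := by
  induction w with
  | nil => exact ⟨.nil, le_rfl⟩
  | @cons a c b h w ih =>
    obtain ⟨p, hp⟩ := ih
    rcases h with ⟨-, hadj⟩ | ⟨e, -⟩ | ⟨-, hadj⟩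
    · exact ⟨p.cons hadj, Nat.succ_le_succ hp⟩
    · exact ⟨p.copy e.symm rfl, (Walk.length_copy _ _ _).le.trans (Nat.le_succ_of_le hp)⟩
    · exact ⟨p.cons hadj, Nat.succ_le_succ hp⟩

lemma liftR (x : α) {v y : β} (q : H.Walk v y) :
    ∃ w : (strongProd G H).Walk (x, v) (x, y), w.length ≤ q.length := by
  induction q with
  | nil => exact ⟨.nil, le_rfl⟩
  | @cons v v' y h q ih =>
    obtain ⟨w, hw⟩ := ih
    have hadj : (strongProd G H).Adj (x, v) (x, v') := Or.inl ⟨rfl, h⟩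
    exact ⟨.cons hadj w, by simpa using hw⟩

lemma liftL (y : β) {u x : α} (p : G.Walk u x) :
    ∃ w : (strongProd G H).Walk (u, y) (x, y), w.length ≤ p.length := by
  induction p with
  | nil => exact ⟨.nil, le_rfl⟩
  | @cons u u' x h p ih =>
    obtain ⟨w, hw⟩ := ih
    have hadj : (strongProd G H).Adj (u, y) (u', y) := Or.inr (Or.inl ⟨rfl, h⟩)
    exact ⟨.cons hadj w, by simpa using hw⟩

lemma combineWalks {u x : α} (p : G.Walk u x) :
    ∀ {v y : β} (q : H.Walk v y),
      ∃ w : (strongProd G H).Walk (u, v) (x, y), w.length ≤ max p.length q.length := by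
  induction p with
  | nil =>
    intro v y q
    obtain ⟨w, hw⟩ := liftR (G := G) _ q
    exact ⟨w, hw.trans (le_max_right _ _)⟩
  | @cons u c x h p ih =>
    intro v y q
    cases q with
    | nil =>
      obtain ⟨w, hw⟩ := liftL (H := H) v (p.cons h)
      exact ⟨w, hw.trans (le_max_left _ _)⟩
    | cons h2 q =>
      obtain ⟨w, hw⟩ := ih q
      refine ⟨.cons (Or.inr (Or.inr ⟨h, h2⟩)) w, ?_⟩
      exact le_trans (Nat.succ_le_succ hw) (by omega : max p.length q.length + 1 ≤ max (p.length + 1) (q.length + 1))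

lemma dist_prod_le (hG : G.Connected) (hH : H.Connected) (u x : α) (v y : β) :
    (strongProd G H).dist (u, v) (x, y) ≤ max (G.dist u x) (H.dist v y) := by
  obtain ⟨p, hp⟩ := hG.exists_walk_length_eq_dist u x
  obtain ⟨q, hq⟩ := hH.exists_walk_length_eq_dist v y
  obtain ⟨w, hw⟩ := combineWalks p q
  exact (SimpleGraph.dist_le w).trans (by rw [← hp, ← hq]; exact hw)

lemma max_dist_le_prod (hG : G.Connected) (hH : H.Connected) (u x : α) (v y : β) :
    max (G.dist u x) (H.dist v y) ≤ (strongProd G H).dist (u, v) (x, y) := by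
  obtain ⟨p0, -⟩ := combineWalks ((hG.exists_walk_length_eq_dist u x).choose)
      ((hH.exists_walk_length_eq_dist v y).choose)
  obtain ⟨w, hw⟩ := SimpleGraph.Reachable.exists_walk_length_eq_dist ⟨p0⟩
  obtain ⟨p, hp⟩ := proj1 w
  obtain ⟨q, hq⟩ := proj2 w
  refine max_le ?_ ?_
  · exact (SimpleGraph.dist_le p).trans (hw ▸ hp)
  · exact (SimpleGraph.dist_le q).trans (hw ▸ hq)

end aux

/-- mcr(G ⊠ H) ≥ max{mcr(G), mcr(H)}. -/
theorem stmt16 {α β : Type*} [Fintype α] [Fintype β] [Nonempty α] [Nonempty β]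
    (G : SimpleGraph α) (H : SimpleGraph β)
    (hG : G.Connected) (hH : H.Connected)
    (l : ℕ) (f : α × β → ℕ) (hf : IsELDB (strongProd G H) l f) :
    (∃ g : α → ℕ, IsELDB G l g) ∧ (∃ h : β → ℕ, IsELDB H l h) := by
  classical
  obtain ⟨hle, hdom⟩ := hf
  constructor
  · obtain ⟨b₀⟩ := ‹Nonempty β›
    set val : α → β → ℕ := fun x y => if H.dist b₀ y ≤ f (x, y) then f (x, y) else 0 with hval
    refine ⟨fun x => Finset.univ.sup (val x), ?_, ?_⟩
    · intro x
      refine Finset.sup_le fun y _ => ?_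
      simp only [hval]
      split
      · exact hle _
      · exact Nat.zero_le _
    · intro u
      have fwd : ∀ x : α, (1 ≤ Finset.univ.sup (val x) ∧ G.dist u x ≤ Finset.univ.sup (val x)) →
          ∃ y, 1 ≤ f (x, y) ∧ (strongProd G H).dist (u, b₀) (x, y) ≤ f (x, y) := by
        rintro x ⟨h1, h2⟩
        obtain ⟨y, -, hy⟩ := Finset.exists_mem_eq_sup Finset.univ Finset.univ_nonempty (val x)
        rw [hy] at h1 h2
        have hcond : H.dist b₀ y ≤ f (x, y) := by
          by_contra hc
          simp [hval, hc] at h1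
        have hvy : val x y = f (x, y) := by simp [hval, hcond]
        rw [hvy] at h1 h2
        exact ⟨y, h1, (dist_prod_le hG hH u x b₀ y).trans (max_le h2 hcond)⟩
      have bwd : ∀ x y, 1 ≤ f (x, y) → (strongProd G H).dist (u, b₀) (x, y) ≤ f (x, y) →
          1 ≤ Finset.univ.sup (val x) ∧ G.dist u x ≤ Finset.univ.sup (val x) := by
        intro x y h1 h2
        have hmax := (max_dist_le_prod hG hH u x b₀ y).trans h2
        have hG' := le_of_max_le_left hmax
        have hH' := le_of_max_le_right hmax
        have hvy : val x y = f (x, y) := by simp [hval, hH']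
        have hsup : f (x, y) ≤ Finset.univ.sup (val x) :=
          hvy ▸ Finset.le_sup (Finset.mem_univ y)
        exact ⟨h1.trans hsup, hG'.trans hsup⟩
      obtain ⟨⟨x0, y0⟩, ⟨hx1, hx2⟩, huniq⟩ := hdom (u, b₀)
      refine ⟨x0, bwd x0 y0 hx1 hx2, ?_⟩
      intro x' hx'
      obtain ⟨y', hy1, hy2⟩ := fwd x' hx'
      exact congrArg Prod.fst (huniq (x', y') ⟨hy1, hy2⟩)
  · obtain ⟨a₀⟩ := ‹Nonempty α›
    set val : β → α → ℕ := fun y x => if G.dist a₀ x ≤ f (x, y) then f (x, y) else 0 with hval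
    refine ⟨fun y => Finset.univ.sup (val y), ?_, ?_⟩
    · intro y
      refine Finset.sup_le fun x _ => ?_
      simp only [hval]
      split
      · exact hle _
      · exact Nat.zero_le _
    · intro v
      have fwd : ∀ y : β, (1 ≤ Finset.univ.sup (val y) ∧ H.dist v y ≤ Finset.univ.sup (val y)) →
          ∃ x, 1 ≤ f (x, y) ∧ (strongProd G H).dist (a₀, v) (x, y) ≤ f (x, y) := by
        rintro y ⟨h1, h2⟩
        obtain ⟨x, -, hx⟩ := Finset.exists_mem_eq_sup Finset.univ Finset.univ_nonempty (val y)
        rw [hx] at h1 h2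
        have hcond : G.dist a₀ x ≤ f (x, y) := by
          by_contra hc
          simp [hval, hc] at h1
        have hvx : val y x = f (x, y) := by simp [hval, hcond]
        rw [hvx] at h1 h2
        exact ⟨x, h1, (dist_prod_le hG hH a₀ x v y).trans (max_le hcond h2)⟩
      have bwd : ∀ y x, 1 ≤ f (x, y) → (strongProd G H).dist (a₀, v) (x, y) ≤ f (x, y) →
          1 ≤ Finset.univ.sup (val y) ∧ H.dist v y ≤ Finset.univ.sup (val y) := by
        intro y x h1 h2
        have hmax := (max_dist_le_prod hG hH a₀ x v y).trans h2
        have hG' := le_of_max_le_left hmax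
        have hH' := le_of_max_le_right hmax
        have hvx : val y x = f (x, y) := by simp [hval, hG']
        have hsup : f (x, y) ≤ Finset.univ.sup (val y) :=
          hvx ▸ Finset.le_sup (Finset.mem_univ x)
        exact ⟨h1.trans hsup, hH'.trans hsup⟩
      obtain ⟨⟨x0, y0⟩, ⟨hx1, hx2⟩, huniq⟩ := hdom (a₀, v)
      refine ⟨y0, bwd y0 x0 hx1 hx2, ?_⟩
      intro y' hy'
      obtain ⟨x', hx1', hx2'⟩ := fwd y' hy'
      exact congrArg Prod.snd (huniq (x', y') ⟨hx1', hx2'⟩)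
end

section
/- If rad(G) = 1, then mcr(G ⊠ H) = mcr(H): given an efficient k-limited dominating broadcast g of H, assigning f(u₀, v) = g(v) for a central vertex u₀ of G (and 0 elsewhere) gives an efficient k-limited dominating broadcast of G ⊠ H of the same total cost; hence also γ_{ebk}(G ⊠ H) = γ_{ebk}(H) for k = mcr(H). -/
open SimpleGraph

section aux
variable {α β : Type*} {G : SimpleGraph α} {H : SimpleGraph β}

def fiberHomL (G : SimpleGraph α) (a : α) : H →g strongProd G H :=
  ⟨fun v => (a, v), fun h => Or.inl ⟨rfl, h⟩⟩

def fiberHomR (H : SimpleGraph β) (b : β) : G →g strongProd G H :=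
  ⟨fun u => (u, b), fun h => Or.inr (Or.inl ⟨rfl, h⟩)⟩

def combineWalk : ∀ {a a' : α} {b b' : β}, G.Walk a a' → H.Walk b b' →
    (strongProd G H).Walk (a, b) (a', b')
  | _, _, _, _, SimpleGraph.Walk.nil, q => q.map (fiberHomL G _)
  | _, _, _, _, SimpleGraph.Walk.cons h p, SimpleGraph.Walk.nil =>
      (SimpleGraph.Walk.cons h p).map (fiberHomR H _)
  | _, _, _, _, SimpleGraph.Walk.cons h p, SimpleGraph.Walk.cons h' q =>
      SimpleGraph.Walk.cons (Or.inr (Or.inr ⟨h, h'⟩)) (combineWalk p q)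

lemma combineWalk_length : ∀ {a a' : α} {b b' : β} (p : G.Walk a a') (q : H.Walk b b'),
    (combineWalk p q).length = max p.length q.length
  | _, _, _, _, SimpleGraph.Walk.nil, q => by
      rw [combineWalk]; exact (SimpleGraph.Walk.length_map _ _).trans (by simp)
  | _, _, _, _, SimpleGraph.Walk.cons h p, SimpleGraph.Walk.nil => by
      rw [combineWalk]; exact (SimpleGraph.Walk.length_map _ _).trans (by simp)
  | _, _, _, _, SimpleGraph.Walk.cons h p, SimpleGraph.Walk.cons h' q => by
      rw [combineWalk]; exact (SimpleGraph.Walk.length_cons _ _).trans (by rw [combineWalk_length p q]; simp [Nat.succ_max_succ])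

lemma proj_dist_le (hG : G.Connected) (hH : H.Connected) :
    ∀ {x y : α × β} (w : (strongProd G H).Walk x y),
      G.dist x.1 y.1 ≤ w.length ∧ H.dist x.2 y.2 ≤ w.length := by
  intro x y w
  induction w with
  | nil => simp [SimpleGraph.dist_self]
  | @cons u v z h w ih =>
    have h1 : G.dist u.1 v.1 ≤ 1 := by
      rcases h with ⟨e, _⟩ | ⟨_, h⟩ | ⟨h, _⟩
      · rw [e]; simp [SimpleGraph.dist_self]
      · exact le_of_eq (SimpleGraph.dist_eq_one_iff_adj.mpr h)
      · exact le_of_eq (SimpleGraph.dist_eq_one_iff_adj.mpr h)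
    have h2 : H.dist u.2 v.2 ≤ 1 := by
      rcases h with ⟨_, h⟩ | ⟨e, _⟩ | ⟨_, h⟩
      · exact le_of_eq (SimpleGraph.dist_eq_one_iff_adj.mpr h)
      · rw [e]; simp [SimpleGraph.dist_self]
      · exact le_of_eq (SimpleGraph.dist_eq_one_iff_adj.mpr h)
    constructor
    · calc G.dist u.1 z.1 ≤ G.dist u.1 v.1 + G.dist v.1 z.1 := hG.dist_triangle
        _ ≤ 1 + w.length := Nat.add_le_add h1 ih.1
        _ = (SimpleGraph.Walk.cons h w).length := by simp [Nat.add_comm]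
    · calc H.dist u.2 z.2 ≤ H.dist u.2 v.2 + H.dist v.2 z.2 := hH.dist_triangle
        _ ≤ 1 + w.length := Nat.add_le_add h2 ih.2
        _ = (SimpleGraph.Walk.cons h w).length := by simp [Nat.add_comm]

lemma strongProd_dist (hG : G.Connected) (hH : H.Connected) (a a' : α) (b b' : β) :
    (strongProd G H).dist (a, b) (a', b') = max (G.dist a a') (H.dist b b') := by
  apply le_antisymm
  · obtain ⟨p, hp⟩ := hG.exists_walk_length_eq_dist a a'
    obtain ⟨q, hq⟩ := hH.exists_walk_length_eq_dist b b'
    calc (strongProd G H).dist (a, b) (a', b') ≤ (combineWalk p q).length :=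
          SimpleGraph.dist_le _
      _ = max (G.dist a a') (H.dist b b') := by rw [combineWalk_length, hp, hq]
  · have hr : (strongProd G H).Reachable (a, b) (a', b') := by
      obtain ⟨p, _⟩ := hG.exists_walk_length_eq_dist a a'
      obtain ⟨q, _⟩ := hH.exists_walk_length_eq_dist b b'
      exact ⟨combineWalk p q⟩
    obtain ⟨w, hw⟩ := hr.exists_walk_length_eq_dist
    have := proj_dist_le hG hH w
    rw [hw] at this
    exact max_le this.1 this.2

end aux

/-- If rad(G) = 1, then mcr(G ⊠ H) = mcr(H) and γ_{ebk}(G ⊠ H) = γ_{ebk}(H) for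
k = mcr(H); the lift of a k-ELDB of H to the layer of a central vertex of G is a
k-ELDB of G ⊠ H of the same cost. -/
theorem stmt18 {α β : Type*} [Fintype α] [Fintype β] [Nonempty α] [Nonempty β]
    [DecidableEq α]
    (G : SimpleGraph α) (H : SimpleGraph β)
    (hG : G.Connected) (hH : H.Connected)
    (u₀ : α) (hc : ∀ w : α, w ≠ u₀ → G.Adj u₀ w) :
    (∀ (k : ℕ) (g : β → ℕ), IsELDB H k g →
        IsELDB (strongProd G H) k (fun p => if p.1 = u₀ then g p.2 else 0) ∧
          cost (fun p : α × β => if p.1 = u₀ then g p.2 else 0) = cost g) ∧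
      sInf {k | ∃ f : α × β → ℕ, IsELDB (strongProd G H) k f} =
        sInf {k | ∃ g : β → ℕ, IsELDB H k g} ∧
      ∀ k : ℕ, k = sInf {k | ∃ g : β → ℕ, IsELDB H k g} →
        sInf {c | ∃ f : α × β → ℕ, IsELDB (strongProd G H) k f ∧ cost f = c} =
          sInf {c | ∃ g : β → ℕ, IsELDB H k g ∧ cost g = c} := by
  classical
  have hdist : ∀ (a a' : α) (b b' : β),
      (strongProd G H).dist (a, b) (a', b') = max (G.dist a a') (H.dist b b') :=
    fun a a' b b' => strongProd_dist hG hH a a' b b'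
  have hdu : ∀ a : α, G.dist a u₀ ≤ 1 := by
    intro a
    by_cases h : a = u₀
    · rw [h]; simp [SimpleGraph.dist_self]
    · exact le_of_eq (SimpleGraph.dist_eq_one_iff_adj.mpr ((hc a h).symm))
  -- Part 1: lifting
  have lift : ∀ (k : ℕ) (g : β → ℕ), IsELDB H k g →
      IsELDB (strongProd G H) k (fun p => if p.1 = u₀ then g p.2 else 0) ∧
        cost (fun p : α × β => if p.1 = u₀ then g p.2 else 0) = cost g := by
    intro k g hg
    refine ⟨⟨?_, ?_⟩, ?_⟩
    · intro p
      by_cases h : p.1 = u₀ <;> simp [h]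
      · exact hg.1 p.2
    · rintro ⟨a, b⟩
      obtain ⟨v, ⟨hv1, hv2⟩, huniq⟩ := hg.2 b
      refine ⟨(u₀, v), ⟨by simpa using hv1, ?_⟩, ?_⟩
      · show (strongProd G H).dist (a, b) (u₀, v) ≤ if u₀ = u₀ then g v else 0
        rw [hdist, if_pos rfl]
        exact max_le (le_trans (hdu a) hv1) hv2
      · rintro ⟨a', b'⟩ ⟨h1, h2⟩
        have ha' : a' = u₀ := by
          by_contra h
          simp [h] at h1
        subst ha'
        simp only [if_pos rfl] at h1 h2
        rw [hdist] at h2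
        have : b' = v := huniq b' ⟨h1, le_trans (le_max_right _ _) h2⟩
        rw [this]
    · unfold cost
      rw [Fintype.sum_prod_type]
      rw [Finset.sum_eq_single u₀]
      · simp
      · intro a _ ha; simp [ha]
      · intro h; exact absurd (Finset.mem_univ u₀) h
  -- projection
  have proj : ∀ (k : ℕ) (f : α × β → ℕ), IsELDB (strongProd G H) k f →
      IsELDB H k (fun b => Finset.univ.sup (fun a => f (a, b))) ∧
        cost (fun b => Finset.univ.sup (fun a => f (a, b))) ≤ cost f := by
    intro k f hf
    set g : β → ℕ := fun b => Finset.univ.sup (fun a => f (a, b)) with hgdef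
    have hatt : ∀ b : β, ∃ a : α, g b = f (a, b) := by
      intro b
      obtain ⟨a, _, ha⟩ := Finset.exists_mem_eq_sup Finset.univ Finset.univ_nonempty
        (fun a => f (a, b))
      exact ⟨a, ha⟩
    have hdom : ∀ (u b : β), (1 ≤ g b ∧ H.dist u b ≤ g b) ↔
        ∃ a : α, 1 ≤ f (a, b) ∧ (strongProd G H).dist (u₀, u) (a, b) ≤ f (a, b) := by
      intro u b
      constructor
      · rintro ⟨h1, h2⟩
        obtain ⟨a, ha⟩ := hatt b
        refine ⟨a, by omega, ?_⟩
        rw [hdist]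
        rw [← ha]
        exact max_le (by rw [SimpleGraph.dist_comm]; have := hdu a; omega) h2
      · rintro ⟨a, h1, h2⟩
        have hle : f (a, b) ≤ g b := Finset.le_sup (f := fun a => f (a, b)) (Finset.mem_univ a)
        rw [hdist] at h2
        exact ⟨le_trans h1 hle, le_trans (le_trans (le_max_right _ _) h2) hle⟩
    refine ⟨⟨fun b => Finset.sup_le (fun a _ => hf.1 (a, b)), ?_⟩, ?_⟩
    · intro u
      obtain ⟨⟨a, b⟩, hab, habu⟩ := hf.2 (u₀, u)
      refine ⟨b, (hdom u b).mpr ⟨a, hab.1, hab.2⟩, ?_⟩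
      intro b' hb'
      obtain ⟨a', h1, h2⟩ := (hdom u b').mp hb'
      have := habu (a', b') ⟨h1, h2⟩
      exact congrArg Prod.snd this
    · unfold cost
      calc ∑ b, g b ≤ ∑ b, ∑ a, f (a, b) := by
            apply Finset.sum_le_sum
            intro b _
            exact Finset.sup_le (fun a _ =>
              Finset.single_le_sum (f := fun a => f (a, b)) (fun a _ => Nat.zero_le _)
                (Finset.mem_univ a))
        _ = ∑ p : α × β, f p := by rw [Fintype.sum_prod_type_right]
  -- set equality
  have hseteq : {k | ∃ f : α × β → ℕ, IsELDB (strongProd G H) k f} =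
      {k | ∃ g : β → ℕ, IsELDB H k g} := by
    ext k
    constructor
    · rintro ⟨f, hf⟩
      exact ⟨_, (proj k f hf).1⟩
    · rintro ⟨g, hg⟩
      exact ⟨_, (lift k g hg).1⟩
  refine ⟨lift, by rw [hseteq], ?_⟩
  -- cost part
  intro k hk
  have hHne : {k | ∃ g : β → ℕ, IsELDB H k g}.Nonempty := by
    obtain ⟨v₀⟩ := ‹Nonempty β›
    refine ⟨ecc H v₀ + 1, fun v => if v = v₀ then ecc H v₀ + 1 else 0, ?_, ?_⟩
    · intro v; by_cases h : v = v₀ <;> simp [h]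
    · intro u
      refine ⟨v₀, ⟨by simp, ?_⟩, ?_⟩
      · simp only [if_pos rfl]
        calc H.dist u v₀ = H.dist v₀ u := SimpleGraph.dist_comm
          _ ≤ ecc H v₀ := Finset.le_sup (Finset.mem_univ u)
          _ ≤ ecc H v₀ + 1 := Nat.le_succ _
      · intro v hv
        by_contra h
        simp [h] at hv
  have hkmem : ∃ g : β → ℕ, IsELDB H k g := by
    rw [hk]; exact Nat.sInf_mem hHne
  obtain ⟨g₀, hg₀⟩ := hkmem
  have hCHne : {c | ∃ g : β → ℕ, IsELDB H k g ∧ cost g = c}.Nonempty :=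
    ⟨cost g₀, g₀, hg₀, rfl⟩
  have hCPne : {c | ∃ f : α × β → ℕ, IsELDB (strongProd G H) k f ∧ cost f = c}.Nonempty := by
    obtain ⟨h1, h2⟩ := lift k g₀ hg₀
    exact ⟨cost g₀, _, h1, h2⟩
  apply le_antisymm
  · obtain ⟨g, hg, hgc⟩ := Nat.sInf_mem hCHne
    apply Nat.sInf_le
    obtain ⟨h1, h2⟩ := lift k g hg
    exact ⟨_, h1, h2.trans hgc⟩
  · obtain ⟨f, hf, hfc⟩ := Nat.sInf_mem hCPne
    obtain ⟨h1, h2⟩ := proj k f hf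
    calc sInf {c | ∃ g : β → ℕ, IsELDB H k g ∧ cost g = c} ≤
          cost (fun b => Finset.univ.sup (fun a => f (a, b))) := Nat.sInf_le ⟨_, h1, rfl⟩
      _ ≤ cost f := h2
      _ = _ := hfc
end

section
/- For an efficient dominating broadcast f on a connected graph G, there is no broadcasting vertex v (f(v) ≥ 1) and support vertex u (a vertex adjacent to a leaf) with adjacent leaf w such that d(u,v) = f(v) and d(w,v) = f(v) + 1. -/
open SimpleGraph

lemma walk_first_step {V : Type*} {G : SimpleGraph V} {w y : V} (p : G.Walk w y)
    (h : w ≠ y) : ∃ x, ∃ q : G.Walk x y, G.Adj w x ∧ q.length + 1 = p.length := by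
  cases p with
  | nil => exact absurd rfl h
  | cons h' q => exact ⟨_, q, h', rfl⟩

/-- In any efficient dominating broadcast there is no broadcasting vertex v and
support vertex u with adjacent leaf w such that d(u,v) = f(v) and
d(w,v) = f(v) + 1. -/
theorem stmt19 {V : Type*} [Fintype V] [DecidableEq V] (G : SimpleGraph V)
    [DecidableRel G.Adj] (hG : G.Connected) (hV : Nontrivial V)
    (f : V → ℕ) (hf : ∀ x : V, ∃! y : V, 1 ≤ f y ∧ G.dist x y ≤ f y) :
    ¬ ∃ (v u w : V), 1 ≤ f v ∧ G.degree w = 1 ∧ G.Adj u w ∧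
      G.dist u v = f v ∧ G.dist w v = f v + 1 := by
  rintro ⟨v, uu, w, hfv, hdeg, hadj, huv, hwv⟩
  -- the unique dominator of w
  obtain ⟨y, ⟨hfy, hwy⟩, huq⟩ := hf w
  -- every neighbor of w equals uu
  have hnbr : ∀ x, G.Adj w x → x = uu := by
    intro x hx
    have hu : uu ∈ G.neighborFinset w := by
      rw [SimpleGraph.mem_neighborFinset]; exact hadj.symm
    have hx' : x ∈ G.neighborFinset w := by
      rw [SimpleGraph.mem_neighborFinset]; exact hx
    exact Finset.card_le_one.mp hdeg.le x hx' uu hu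
  -- y also dominates uu
  have huy : G.dist uu y ≤ f y := by
    by_cases hyw : y = w
    · subst hyw
      have : G.dist uu y = 1 := SimpleGraph.dist_eq_one_iff_adj.mpr hadj
      omega
    · -- take a shortest walk from w to y; its first step goes to uu
      obtain ⟨p, hp⟩ := hG.exists_walk_length_eq_dist w y
      obtain ⟨x, q, h, hq⟩ := walk_first_step p (Ne.symm hyw)
      have hxu := hnbr x h
      have h2 : G.dist uu y ≤ q.length := by
        rw [← hxu]; exact SimpleGraph.dist_le q
      omega
  -- uniqueness at uu forces y = v
  obtain ⟨z, _, hz⟩ := hf uu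
  have hyv : y = v := by
    have h1 := hz y ⟨hfy, huy⟩
    have h2 := hz v ⟨hfv, huv.le⟩
    rw [h1, h2]
  subst hyv
  omega
end
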